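/- Let f : ℝⁿ → ℂ be bounded and uniformly continuous and let G ∈ C^∞(ℝ²) be viewed as a function of a complex variable (or assume f real-valued and G ∈ C^∞(ℝ)). Suppose (S_j f)_{j≥0} is the Littlewood–Paley low-pass approximation S_j f = φ(D/2^j) f with φ ∈ 𝒮, φ = 1 on {|ξ| ≤ 1/2}, supp φ ⊂ {|ξ| ≤ 1}. Then S_j f → f uniformly, and the telescoping identity G(f) = G(S₀f) + Σ_{j=0}^∞ m_j · Δ_j f holds with uniform convergence, where Δ_j f = S_{j+1}f − S_j f and m_j = ∫₀¹ G′(S_j f + t Δ_j f) dt. -/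

import Mathlib

open MeasureTheory Filter
open scoped ENNReal NNReal FourierTransform

noncomputable section

/-- The Littlewood–Paley low-pass approximation `S_j f = φ(D/2^j) f`, realized as the
convolution of `f` with the `L¹` kernel `2^{jn} (𝓕⁻¹φ)(2^j ·)`. -/
def lowPass {n : ℕ} (φ : SchwartzMap (EuclideanSpace ℝ (Fin n)) ℂ)
    (f : EuclideanSpace ℝ (Fin n) → ℂ) (j : ℕ) (x : EuclideanSpace ℝ (Fin n)) : ℂ :=
  ∫ t, (((2 : ℝ) ^ (j * n) : ℝ) : ℂ) * 𝓕⁻ (⇑φ) (((2 : ℝ) ^ j) • t) * f (x - t)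

/-!
Since `∫ 𝓕⁻φ = φ 0 = 1`, the substitution `u = 2^j t` writes `S_j f x = ∫ 𝓕⁻φ(u) f(x - 2^{-j} u) du`
as an average of translates of `f` against a fixed integrable kernel. Uniform convergence
`S_j f → f` then reduces, along any sequence of base points, to dominated convergence, the
integrand tending to `0` pointwise by uniform continuity of `f`. By the fundamental theorem of
calculus on each segment the partial sums telescope to `G (S_J f)`, and `G` is uniformly continuous
on a closed ball that contains the values of `f` and, eventually, those of `S_J f`.
-/

open Topology

section Segment

variable {E F : Type*} [NormedAddCommGroup E] [NormedSpace ℝ E] [NormedAddCommGroup F]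
  [NormedSpace ℝ F] [CompleteSpace F] {G : E → F}

theorem integral_fderiv_segment_eq_sub (hG : ContDiff ℝ 1 G) (a b : E) :
    ∫ t in (0:ℝ)..1, fderiv ℝ G (a + t • (b - a)) (b - a) = G b - G a := by
  have hline : ∀ t : ℝ, HasDerivAt (fun t : ℝ => a + t • (b - a)) (b - a) t := fun t => by
    simpa using ((hasDerivAt_id t).smul_const (b - a)).const_add a
  have hderiv : ∀ t ∈ Set.uIcc (0:ℝ) 1, HasDerivAt (fun t : ℝ => G (a + t • (b - a)))
      (fderiv ℝ G (a + t • (b - a)) (b - a)) t := fun t _ =>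
    ((hG.differentiable one_ne_zero _).hasFDerivAt).comp_hasDerivAt t (hline t)
  have hcont : Continuous fun t : ℝ => fderiv ℝ G (a + t • (b - a)) (b - a) :=
    ((hG.continuous_fderiv one_ne_zero).comp (continuous_const.add
      (continuous_id.smul continuous_const))).clm_apply continuous_const
  rw [intervalIntegral.integral_eq_sub_of_hasDerivAt hderiv (hcont.intervalIntegrable 0 1)]
  simp

theorem add_sum_integral_fderiv_segment (hG : ContDiff ℝ 1 G) (s : ℕ → E) (J : ℕ) :
    G (s 0) + ∑ j ∈ Finset.range J,
      ∫ t in (0:ℝ)..1, fderiv ℝ G (s j + t • (s (j + 1) - s j)) (s (j + 1) - s j) = G (s J) := by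
  simp_rw [integral_fderiv_segment_eq_sub hG, Finset.sum_range_sub (fun j => G (s j))]
  abel

end Segment

theorem tendstoUniformly_of_forall_seq {α β : Type*} [PseudoMetricSpace β] {F : ℕ → α → β}
    {f : α → β} (h : ∀ x : ℕ → α, Tendsto (fun j => dist (f (x j)) (F j (x j))) atTop (𝓝 0)) :
    TendstoUniformly F f atTop := by
  rw [Metric.tendstoUniformly_iff]
  intro ε hε
  by_contra hbad
  have hfreq : ∃ᶠ j in atTop, ∃ y, ε ≤ dist (f y) (F j y) := by
    simpa only [not_eventually, not_forall, not_lt] using hbad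
  obtain ⟨-, a, -⟩ := hfreq.exists
  have hpick : ∀ j, ∃ x, (∃ y, ε ≤ dist (f y) (F j y)) → ε ≤ dist (f x) (F j x) := fun j => by
    by_cases hj : ∃ y, ε ≤ dist (f y) (F j y)
    · exact ⟨hj.choose, fun _ => hj.choose_spec⟩
    · exact ⟨a, fun h => absurd h hj⟩
  choose x hx using hpick
  have hfar : ∃ᶠ j in atTop, ε ≤ dist (f (x j)) (F j (x j)) :=
    hfreq.mono fun j hj => hx j hj
  obtain ⟨j, hfar, hnear⟩ := (hfar.and_eventually ((h x).eventually (gt_mem_nhds hε))).exists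
  exact hnear.not_ge hfar

theorem tendstoUniformly_integral_mul_comp_smul {𝕜 E : Type*} [RCLike 𝕜] [NormedAddCommGroup E]
    [NormedSpace ℝ E] [MeasurableSpace E] [OpensMeasurableSpace E] {μ : Measure E} {k : E → 𝕜}
    (hk : Integrable k μ) (hk1 : ∫ u, k u ∂μ = 1) {f : E → 𝕜} {M : ℝ} (hM : ∀ x, ‖f x‖ ≤ M)
    (hf : UniformContinuous f) {c : ℕ → ℝ} (hc : Tendsto c atTop (𝓝 0)) :
    TendstoUniformly (fun j x => ∫ u, k u * f (x - c j • u) ∂μ) f atTop := by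
  have hmeas : ∀ x (r : ℝ), AEStronglyMeasurable (fun u => f (x - r • u)) μ := fun x r =>
    (hf.continuous.comp (continuous_const.sub (continuous_const_smul r))).aestronglyMeasurable
  have hdist : ∀ x (r : ℝ), dist (f x) (∫ u, k u * f (x - r • u) ∂μ)
      = ‖∫ u, k u * (f (x - r • u) - f x) ∂μ‖ := fun x r => by
    simp_rw [mul_sub]
    rw [integral_sub (hk.mul_bdd (hmeas x r) (.of_forall fun u => hM _)) (hk.mul_const _),
      integral_mul_const, hk1, one_mul, dist_eq_norm']
  refine tendstoUniformly_of_forall_seq fun x => ?_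
  simp_rw [hdist]
  have hpointwise : ∀ u, Tendsto (fun j => f (x j - c j • u) - f (x j)) atTop (𝓝 0) := fun u => by
    have hclose : Tendsto (fun j => (x j - c j • u, x j)) atTop (uniformity E) := by
      rw [tendsto_uniformity_iff_dist_tendsto_zero]
      simpa [dist_eq_norm, norm_smul] using (hc.norm.mul_const ‖u‖)
    rw [tendsto_zero_iff_norm_tendsto_zero]
    simpa [dist_eq_norm] using tendsto_uniformity_iff_dist_tendsto_zero.mp (Tendsto.comp hf hclose)
  have hlim := tendsto_integral_of_dominated_convergence (μ := μ)
    (F := fun j u => k u * (f (x j - c j • u) - f (x j))) (f := fun _ => 0)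
    (fun u => ‖k u‖ * (M + M))
    (fun j => hk.aestronglyMeasurable.mul ((hmeas _ _).sub aestronglyMeasurable_const))
    (hk.norm.mul_const _) (fun j => .of_forall fun u => ?_)
    (.of_forall fun u => by simpa using (hpointwise u).const_mul (k u))
  · simpa using hlim.norm
  · rw [norm_mul]
    gcongr
    exact (norm_sub_le _ _).trans (add_le_add (hM _) (hM _))

theorem SchwartzMap.integral_fourierInv {V E : Type*} [NormedAddCommGroup V]
    [InnerProductSpace ℝ V] [FiniteDimensional ℝ V] [MeasurableSpace V] [BorelSpace V]
    [NormedAddCommGroup E] [NormedSpace ℂ E] [CompleteSpace E] (φ : SchwartzMap V E) :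
    ∫ v, 𝓕⁻ φ v = φ 0 := by
  have := DFunLike.congr_fun (FourierTransform.fourier_fourierInv_eq (F := SchwartzMap V E) φ) 0
  rw [SchwartzMap.fourier_coe, Real.fourier_eq] at this
  simpa using this

theorem lowPass_eq_integral_comp_smul {n : ℕ} (φ : SchwartzMap (EuclideanSpace ℝ (Fin n)) ℂ)
    (f : EuclideanSpace ℝ (Fin n) → ℂ) (j : ℕ) (x : EuclideanSpace ℝ (Fin n)) :
    lowPass φ f j x = ∫ u, 𝓕⁻ φ u * f (x - ((2:ℝ) ^ j)⁻¹ • u) := by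
  have hscale := Measure.integral_comp_inv_smul_of_nonneg volume
    (fun y => 𝓕⁻ φ ((2:ℝ) ^ j • y) * f (x - y)) (R := (2:ℝ) ^ j) (by positivity)
  simp only [smul_inv_smul₀ (pow_ne_zero j (two_ne_zero : (2:ℝ) ≠ 0)),
    finrank_euclideanSpace_fin] at hscale
  rw [hscale, lowPass, ← SchwartzMap.fourierInv_coe, Complex.real_smul, ← integral_const_mul]
  simp_rw [mul_assoc]
  push_cast
  rw [pow_mul]

theorem lowpass_telescoping_identity_general (n : ℕ)
    (φ : SchwartzMap (EuclideanSpace ℝ (Fin n)) ℂ)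
    (hφ1 : ∀ ξ, ‖ξ‖ ≤ 1 / 2 → φ ξ = 1)
    (f : EuclideanSpace ℝ (Fin n) → ℂ)
    (hfb : ∃ M, ∀ x, ‖f x‖ ≤ M) (hfu : UniformContinuous f)
    (G : ℂ → ℂ) (hG : ContDiff ℝ (⊤ : ℕ∞) G) :
    TendstoUniformly (fun j => lowPass φ f j) f atTop ∧
    TendstoUniformly
      (fun J x => G (lowPass φ f 0 x) +
        ∑ j ∈ Finset.range J,
          ∫ t in (0:ℝ)..1,
            fderiv ℝ G (lowPass φ f j x + t • (lowPass φ f (j+1) x - lowPass φ f j x))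
              (lowPass φ f (j+1) x - lowPass φ f j x))
      (fun x => G (f x)) atTop := by
  obtain ⟨M, hM⟩ := hfb
  have hconv : TendstoUniformly (fun j => lowPass φ f j) f atTop := by
    simp_rw [funext₂ (lowPass_eq_integral_comp_smul φ f)]
    refine tendstoUniformly_integral_mul_comp_smul (𝓕⁻ φ).integrable ?_ hM hfu
      (tendsto_inv_atTop_zero.comp (tendsto_pow_atTop_atTop_of_one_lt one_lt_two))
    rw [SchwartzMap.integral_fourierInv]
    exact hφ1 0 (by simp)
  refine ⟨hconv, ?_⟩
  have hnear : ∀ᶠ J in atTop, ∀ x, lowPass φ f J x ∈ Metric.closedBall 0 (M + 1) :=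
    (Metric.tendstoUniformly_iff.mp hconv 1 one_pos).mono fun J hJ x => by
      simpa [dist_eq_norm] using (norm_le_norm_add_norm_sub' _ (f x)).trans
        (add_le_add (hM x) (by rw [← dist_eq_norm']; exact (hJ x).le))
  convert UniformContinuousOn.comp_tendstoUniformly_eventually hnear
    (fun x => by simpa using (hM x).trans (le_add_of_nonneg_right zero_le_one))
    ((isCompact_closedBall 0 _).uniformContinuousOn_of_continuous hG.continuous.continuousOn)
    hconv using 1
  funext J x
  exact add_sum_integral_fderiv_segment (hG.of_le (by simp)) (fun j => lowPass φ f j x) J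

/-- **telescoping identity.** Let `f : ℝⁿ → ℂ` be bounded and uniformly
continuous, let `G : ℂ → ℂ` be smooth in the real sense (`G ∈ C^∞(ℝ²)`), and let
`φ ∈ 𝒮(ℝⁿ)` satisfy `φ = 1` on `{|ξ| ≤ 1/2}` and `supp φ ⊆ {|ξ| ≤ 1}`. With
`S_j f` the low-pass approximations and `Δ_j f = S_{j+1}f − S_j f`, one has `S_j f → f`
uniformly, and `G(f) = G(S₀ f) + Σ_{j=0}^∞ m_j · Δ_j f` with uniform convergence, where
`m_j = ∫₀¹ G′(S_j f + t Δ_j f) dt` (the sum folds `m_j · Δ_j f` into one Bochner integral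
of the Fréchet derivative of `G` applied to `Δ_j f`). -/
theorem lowpass_telescoping_identity (n : ℕ)
    (φ : SchwartzMap (EuclideanSpace ℝ (Fin n)) ℂ)
    (hφ1 : ∀ ξ, ‖ξ‖ ≤ 1 / 2 → φ ξ = 1)
    (hφ2 : Function.support ⇑φ ⊆ Metric.closedBall 0 1)
    (f : EuclideanSpace ℝ (Fin n) → ℂ)
    (hfb : ∃ M, ∀ x, ‖f x‖ ≤ M) (hfu : UniformContinuous f)
    (G : ℂ → ℂ) (hG : ContDiff ℝ (⊤ : ℕ∞) G) :
    TendstoUniformly (fun j => lowPass φ f j) f atTop ∧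
    TendstoUniformly
      (fun J x => G (lowPass φ f 0 x) +
        ∑ j ∈ Finset.range J,
          ∫ t in (0:ℝ)..1,
            fderiv ℝ G (lowPass φ f j x + t • (lowPass φ f (j+1) x - lowPass φ f j x))
              (lowPass φ f (j+1) x - lowPass φ f j x))
      (fun x => G (f x)) atTop :=
  lowpass_telescoping_identity_general n φ hφ1 f hfb hfu G hG
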